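/- arXiv:math/0511437 — 8 statements merged into one kernel-verified Lean document; each statement's English description precedes it below -/
import Mathlib

section
/- Let (X₁,d₁) and (X₂,d₂) be ultrametric spaces with X₁ ∩ X₂ = A nonempty, such that d₁ and d₂ agree on A × A. Define d on X₁ ∪ X₂ by d = d₁ on X₁ × X₁, d = d₂ on X₂ × X₂, and d(x₁,x₂) = inf { max(d₁(x₁,a), d₂(a,x₂)) : a ∈ A } for x₁ ∈ X₁ \ X₂, x₂ ∈ X₂ \ X₁. Then d satisfies the strong triangle inequality d(x,y) ≤ max(d(x,z), d(z,y)) for all x,y,z in X₁ ∪ X₂. -/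
section AmalgamHelpers

variable {X : Type*}

private theorem amalgam_nonneg (X1 : Set X) (d1 : X → X → ℝ)
    (h1eq : ∀ x ∈ X1, ∀ y ∈ X1, (d1 x y = 0 ↔ x = y))
    (h1symm : ∀ x ∈ X1, ∀ y ∈ X1, d1 x y = d1 y x)
    (h1tri : ∀ x ∈ X1, ∀ y ∈ X1, ∀ z ∈ X1, d1 x y ≤ max (d1 x z) (d1 z y)) :
    ∀ x ∈ X1, ∀ y ∈ X1, 0 ≤ d1 x y := by
  intro x hx y hy
  have h0 : d1 x x = 0 := (h1eq x hx x hx).mpr rfl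
  have h := h1tri x hx x hx y hy
  rw [h0, h1symm y hy x hx, max_self] at h
  linarith

private theorem amalgam_inf (X1 X2 : Set X) (hA : (X1 ∩ X2).Nonempty)
    (d1 d2 d : X → X → ℝ)
    (h1refl : ∀ x ∈ X1, d1 x x = 0)
    (h2refl : ∀ x ∈ X2, d2 x x = 0)
    (h1nn : ∀ x ∈ X1, ∀ y ∈ X1, 0 ≤ d1 x y)
    (h2nn : ∀ x ∈ X2, ∀ y ∈ X2, 0 ≤ d2 x y)
    (h1tri : ∀ x ∈ X1, ∀ y ∈ X1, ∀ z ∈ X1, d1 x y ≤ max (d1 x z) (d1 z y))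
    (h2tri : ∀ x ∈ X2, ∀ y ∈ X2, ∀ z ∈ X2, d2 x y ≤ max (d2 x z) (d2 z y))
    (hagree : ∀ a b, a ∈ X1 → a ∈ X2 → b ∈ X1 → b ∈ X2 → d1 a b = d2 a b)
    (Q1 : ∀ x ∈ X1, ∀ y ∈ X1, d x y = d1 x y)
    (Q2 : ∀ x ∈ X2, ∀ y ∈ X2, d x y = d2 x y)
    (Q3 : ∀ x, x ∈ X1 → x ∉ X2 → ∀ y, y ∈ X2 → y ∉ X1 →
      d x y = sInf ((fun a => max (d1 x a) (d2 a y)) '' (X1 ∩ X2))) :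
    ∀ x ∈ X1, ∀ y ∈ X2,
      d x y = sInf ((fun a => max (d1 x a) (d2 a y)) '' (X1 ∩ X2)) := by
  intro x hx y hy
  have hSne : ((fun a => max (d1 x a) (d2 a y)) '' (X1 ∩ X2)).Nonempty := hA.image _
  have hSbdd : BddBelow ((fun a => max (d1 x a) (d2 a y)) '' (X1 ∩ X2)) := by
    refine ⟨0, ?_⟩
    rintro t ⟨a, ⟨ha1, ha2⟩, rfl⟩
    exact le_trans (h1nn x hx a ha1) (le_max_left _ _)
  by_cases hy1 : y ∈ X1
  · rw [Q1 x hx y hy1]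
    apply le_antisymm
    · apply le_csInf hSne
      rintro t ⟨a, ⟨ha1, ha2⟩, rfl⟩
      have h := hagree a y ha1 ha2 hy1 hy
      simp only []
      rw [← h]
      exact h1tri x hx y hy1 a ha1
    · apply csInf_le hSbdd
      refine ⟨y, ⟨hy1, hy⟩, ?_⟩
      simp only []
      rw [h2refl y hy, max_eq_left (h1nn x hx y hy1)]
  · by_cases hx2 : x ∈ X2
    · rw [Q2 x hx2 y hy]
      apply le_antisymm
      · apply le_csInf hSne
        rintro t ⟨a, ⟨ha1, ha2⟩, rfl⟩
        simp only []
        rw [hagree x a hx hx2 ha1 ha2]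
        exact h2tri x hx2 y hy a ha2
      · apply csInf_le hSbdd
        refine ⟨x, ⟨hx, hx2⟩, ?_⟩
        simp only []
        rw [h1refl x hx, max_eq_right (h2nn x hx2 y hy)]
    · exact Q3 x hx hx2 y hy hy1

private theorem amalgam_tri (X1 X2 : Set X)
    (d1 d2 d : X → X → ℝ)
    (h1tri : ∀ x ∈ X1, ∀ y ∈ X1, ∀ z ∈ X1, d1 x y ≤ max (d1 x z) (d1 z y))
    (h2tri : ∀ x ∈ X2, ∀ y ∈ X2, ∀ z ∈ X2, d2 x y ≤ max (d2 x z) (d2 z y))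
    (hagree : ∀ a b, a ∈ X1 → a ∈ X2 → b ∈ X1 → b ∈ X2 → d1 a b = d2 a b)
    (P1 : ∀ x ∈ X1, ∀ y ∈ X1, d x y = d1 x y)
    (P2 : ∀ x ∈ X2, ∀ y ∈ X2, d x y = d2 x y)
    (P3u : ∀ x ∈ X1, ∀ y ∈ X2, ∀ a, a ∈ X1 → a ∈ X2 → d x y ≤ max (d1 x a) (d2 a y))
    (P3a : ∀ x ∈ X1, ∀ y ∈ X2, ∀ ε > (0:ℝ), ∃ a, a ∈ X1 ∧ a ∈ X2 ∧
      max (d1 x a) (d2 a y) ≤ d x y + ε)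
    (P4a : ∀ x ∈ X2, ∀ y ∈ X1, ∀ ε > (0:ℝ), ∃ a, a ∈ X1 ∧ a ∈ X2 ∧
      max (d2 x a) (d1 a y) ≤ d x y + ε) :
    ∀ x ∈ X1, ∀ y, (y ∈ X1 ∨ y ∈ X2) → ∀ z, (z ∈ X1 ∨ z ∈ X2) →
      d x y ≤ max (d x z) (d z y) := by
  intro x hx y hy z hz
  rcases hy with hy1 | hy2
  · rcases hz with hz1 | hz2
    · -- all in X1
      rw [P1 x hx y hy1, P1 x hx z hz1, P1 z hz1 y hy1]
      exact h1tri x hx y hy1 z hz1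
    · -- x,y ∈ X1, z ∈ X2
      refine le_of_forall_pos_le_add ?_
      intro ε hε
      obtain ⟨a, ha1, ha2, hA1⟩ := P3a x hx z hz2 ε hε
      obtain ⟨b, hb1, hb2, hB1⟩ := P4a z hz2 y hy1 ε hε
      have h1 : d1 x y ≤ max (d1 x a) (d1 a y) := h1tri x hx y hy1 a ha1
      have h2 : d1 a y ≤ max (d1 a b) (d1 b y) := h1tri a ha1 y hy1 b hb1
      have h3 : d1 a b = d2 a b := hagree a b ha1 ha2 hb1 hb2
      have h4 : d2 a b ≤ max (d2 a z) (d2 z b) := h2tri a ha2 b hb2 z hz2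
      have key : d1 x y ≤ max (max (d1 x a) (d2 a z)) (max (d2 z b) (d1 b y)) := by
        rw [max_assoc, ← max_assoc (d2 a z)]
        exact h1.trans (max_le_max le_rfl
          (h2.trans (max_le_max (h3.trans_le h4) le_rfl)))
      rw [P1 x hx y hy1]
      calc d1 x y ≤ max (max (d1 x a) (d2 a z)) (max (d2 z b) (d1 b y)) := key
        _ ≤ max (d x z + ε) (d z y + ε) := max_le_max hA1 hB1
        _ = max (d x z) (d z y) + ε := max_add_add_right _ _ _
  · rcases hz with hz1 | hz2
    · -- x ∈ X1, y ∈ X2, z ∈ X1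
      refine le_of_forall_pos_le_add ?_
      intro ε hε
      obtain ⟨a, ha1, ha2, hA1⟩ := P3a z hz1 y hy2 ε hε
      have h1 : d x y ≤ max (d1 x a) (d2 a y) := P3u x hx y hy2 a ha1 ha2
      have h2 : d1 x a ≤ max (d1 x z) (d1 z a) := h1tri x hx a ha1 z hz1
      calc d x y ≤ max (d1 x a) (d2 a y) := h1
        _ ≤ max (max (d1 x z) (d1 z a)) (d2 a y) := max_le_max h2 le_rfl
        _ = max (d1 x z) (max (d1 z a) (d2 a y)) := max_assoc _ _ _
        _ ≤ max (d x z) (d z y + ε) := max_le_max (P1 x hx z hz1).ge hA1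
        _ ≤ max (d x z + ε) (d z y + ε) := max_le_max (by linarith) le_rfl
        _ = max (d x z) (d z y) + ε := max_add_add_right _ _ _
    · -- x ∈ X1, y ∈ X2, z ∈ X2
      refine le_of_forall_pos_le_add ?_
      intro ε hε
      obtain ⟨a, ha1, ha2, hA1⟩ := P3a x hx z hz2 ε hε
      have h1 : d x y ≤ max (d1 x a) (d2 a y) := P3u x hx y hy2 a ha1 ha2
      have h2 : d2 a y ≤ max (d2 a z) (d2 z y) := h2tri a ha2 y hy2 z hz2
      calc d x y ≤ max (d1 x a) (max (d2 a z) (d2 z y)) :=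
            h1.trans (max_le_max le_rfl h2)
        _ = max (max (d1 x a) (d2 a z)) (d2 z y) := (max_assoc _ _ _).symm
        _ ≤ max (d x z + ε) (d z y) := max_le_max hA1 (P2 z hz2 y hy2).ge
        _ ≤ max (d x z + ε) (d z y + ε) := max_le_max le_rfl (by linarith)
        _ = max (d x z) (d z y) + ε := max_add_add_right _ _ _

end AmalgamHelpers

open Classical in

/-- Amalgamation of two ultrametrics along a common nonempty intersection:
the glued distance satisfies the strong triangle inequality on `X₁ ∪ X₂`. -/
theorem ultrametric_amalgam_strong_triangle {X : Type*} (X1 X2 : Set X)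
    (hA : (X1 ∩ X2).Nonempty)
    (d1 d2 : X → X → ℝ)
    (h1eq : ∀ x ∈ X1, ∀ y ∈ X1, (d1 x y = 0 ↔ x = y))
    (h1symm : ∀ x ∈ X1, ∀ y ∈ X1, d1 x y = d1 y x)
    (h1tri : ∀ x ∈ X1, ∀ y ∈ X1, ∀ z ∈ X1, d1 x y ≤ max (d1 x z) (d1 z y))
    (h2eq : ∀ x ∈ X2, ∀ y ∈ X2, (d2 x y = 0 ↔ x = y))
    (h2symm : ∀ x ∈ X2, ∀ y ∈ X2, d2 x y = d2 y x)
    (h2tri : ∀ x ∈ X2, ∀ y ∈ X2, ∀ z ∈ X2, d2 x y ≤ max (d2 x z) (d2 z y))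
    (hagree : ∀ a ∈ X1 ∩ X2, ∀ b ∈ X1 ∩ X2, d1 a b = d2 a b)
    (d : X → X → ℝ)
    (hd : ∀ x y, d x y =
      if x ∈ X1 ∧ y ∈ X1 then d1 x y
      else if x ∈ X2 ∧ y ∈ X2 then d2 x y
      else if x ∈ X1 then sInf ((fun a => max (d1 x a) (d2 a y)) '' (X1 ∩ X2))
      else sInf ((fun a => max (d2 x a) (d1 a y)) '' (X1 ∩ X2))) :
    ∀ x ∈ X1 ∪ X2, ∀ y ∈ X1 ∪ X2, ∀ z ∈ X1 ∪ X2,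
      d x y ≤ max (d x z) (d z y) := by
  have h1nn := amalgam_nonneg X1 d1 h1eq h1symm h1tri
  have h2nn := amalgam_nonneg X2 d2 h2eq h2symm h2tri
  have h1refl : ∀ x ∈ X1, d1 x x = 0 := fun x hx => (h1eq x hx x hx).mpr rfl
  have h2refl : ∀ x ∈ X2, d2 x x = 0 := fun x hx => (h2eq x hx x hx).mpr rfl
  have hagree' : ∀ a b, a ∈ X1 → a ∈ X2 → b ∈ X1 → b ∈ X2 → d1 a b = d2 a b :=
    fun a b ha1 ha2 hb1 hb2 => hagree a ⟨ha1, ha2⟩ b ⟨hb1, hb2⟩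
  have Q1 : ∀ x ∈ X1, ∀ y ∈ X1, d x y = d1 x y := by
    intro x hx y hy
    rw [hd, if_pos ⟨hx, hy⟩]
  have Q2 : ∀ x ∈ X2, ∀ y ∈ X2, d x y = d2 x y := by
    intro x hx y hy
    rw [hd]
    by_cases h : x ∈ X1 ∧ y ∈ X1
    · rw [if_pos h]
      exact hagree' x y h.1 hx h.2 hy
    · rw [if_neg h, if_pos ⟨hx, hy⟩]
  have Q3 : ∀ x, x ∈ X1 → x ∉ X2 → ∀ y, y ∈ X2 → y ∉ X1 →
      d x y = sInf ((fun a => max (d1 x a) (d2 a y)) '' (X1 ∩ X2)) := by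
    intro x hx1 hx2 y hy2 hy1
    rw [hd, if_neg (fun h => hy1 h.2), if_neg (fun h => hx2 h.1), if_pos hx1]
  have Q3' : ∀ x, x ∈ X2 → x ∉ X1 → ∀ y, y ∈ X1 → y ∉ X2 →
      d x y = sInf ((fun a => max (d2 x a) (d1 a y)) '' (X2 ∩ X1)) := by
    intro x hx2 hx1 y hy1 hy2
    rw [hd, if_neg (fun h => hx1 h.1), if_neg (fun h => hy2 h.2), if_neg hx1,
      Set.inter_comm X1 X2]
  have hA' : (X2 ∩ X1).Nonempty := by rwa [Set.inter_comm]
  have L3 := amalgam_inf X1 X2 hA d1 d2 d h1refl h2refl h1nn h2nn h1tri h2tri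
    hagree' Q1 Q2 Q3
  have L4 := amalgam_inf X2 X1 hA' d2 d1 d h2refl h1refl h2nn h1nn h2tri h1tri
    (fun a b ha2 ha1 hb2 hb1 => (hagree' a b ha1 ha2 hb1 hb2).symm) Q2 Q1 Q3'
  have bdd1 : ∀ x ∈ X1, ∀ y,
      BddBelow ((fun a => max (d1 x a) (d2 a y)) '' (X1 ∩ X2)) := by
    intro x hx y
    refine ⟨0, ?_⟩
    rintro t ⟨a, ⟨ha1, ha2⟩, rfl⟩
    exact le_trans (h1nn x hx a ha1) (le_max_left _ _)
  have bdd2 : ∀ x ∈ X2, ∀ y,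
      BddBelow ((fun a => max (d2 x a) (d1 a y)) '' (X2 ∩ X1)) := by
    intro x hx y
    refine ⟨0, ?_⟩
    rintro t ⟨a, ⟨ha2, ha1⟩, rfl⟩
    exact le_trans (h2nn x hx a ha2) (le_max_left _ _)
  have P3u : ∀ x ∈ X1, ∀ y ∈ X2, ∀ a, a ∈ X1 → a ∈ X2 →
      d x y ≤ max (d1 x a) (d2 a y) := by
    intro x hx y hy a ha1 ha2
    rw [L3 x hx y hy]
    exact csInf_le (bdd1 x hx y) ⟨a, ⟨ha1, ha2⟩, rfl⟩
  have P4u : ∀ x ∈ X2, ∀ y ∈ X1, ∀ a, a ∈ X1 → a ∈ X2 →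
      d x y ≤ max (d2 x a) (d1 a y) := by
    intro x hx y hy a ha1 ha2
    rw [L4 x hx y hy]
    exact csInf_le (bdd2 x hx y) ⟨a, ⟨ha2, ha1⟩, rfl⟩
  have P3a : ∀ x ∈ X1, ∀ y ∈ X2, ∀ ε > (0:ℝ), ∃ a, a ∈ X1 ∧ a ∈ X2 ∧
      max (d1 x a) (d2 a y) ≤ d x y + ε := by
    intro x hx y hy ε hε
    have hne : ((fun a => max (d1 x a) (d2 a y)) '' (X1 ∩ X2)).Nonempty := hA.image _
    have hlt : sInf ((fun a => max (d1 x a) (d2 a y)) '' (X1 ∩ X2)) < d x y + ε := by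
      rw [L3 x hx y hy]
      exact lt_add_of_pos_right _ hε
    obtain ⟨t, ⟨a, ⟨ha1, ha2⟩, rfl⟩, hlt'⟩ := exists_lt_of_csInf_lt hne hlt
    exact ⟨a, ha1, ha2, hlt'.le⟩
  have P4a : ∀ x ∈ X2, ∀ y ∈ X1, ∀ ε > (0:ℝ), ∃ a, a ∈ X1 ∧ a ∈ X2 ∧
      max (d2 x a) (d1 a y) ≤ d x y + ε := by
    intro x hx y hy ε hε
    have hne : ((fun a => max (d2 x a) (d1 a y)) '' (X2 ∩ X1)).Nonempty := hA'.image _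
    have hlt : sInf ((fun a => max (d2 x a) (d1 a y)) '' (X2 ∩ X1)) < d x y + ε := by
      rw [L4 x hx y hy]
      exact lt_add_of_pos_right _ hε
    obtain ⟨t, ⟨a, ⟨ha2, ha1⟩, rfl⟩, hlt'⟩ := exists_lt_of_csInf_lt hne hlt
    exact ⟨a, ha1, ha2, hlt'.le⟩
  intro x hxu y hyu z hzu
  have hy' : y ∈ X1 ∨ y ∈ X2 := hyu
  have hz' : z ∈ X1 ∨ z ∈ X2 := hzu
  rcases hxu with hx | hx
  · exact amalgam_tri X1 X2 d1 d2 d h1tri h2tri hagree' Q1 Q2 P3u P3a P4a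
      x hx y hy' z hz'
  · exact amalgam_tri X2 X1 d2 d1 d h2tri h1tri
      (fun a b ha2 ha1 hb2 hb1 => (hagree' a b ha1 ha2 hb1 hb2).symm)
      Q2 Q1
      (fun x hx y hy a ha2 ha1 => P4u x hx y hy a ha1 ha2)
      (fun x hx y hy ε hε => by
        obtain ⟨a, h1, h2, h3⟩ := P4a x hx y hy ε hε
        exact ⟨a, h2, h1, h3⟩)
      (fun x hx y hy ε hε => by
        obtain ⟨a, h1, h2, h3⟩ := P3a x hx y hy ε hε
        exact ⟨a, h2, h1, h3⟩)
      x hx y hy'.symm z hz'.symm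
end

section
/- Let (X₁,d₁) and (X₂,d₂) be ultrametric spaces with X₁ ∩ X₂ = A nonempty and compact, and suppose d₁ and d₂ agree on A × A. Then there exists an ultrametric d on X₁ ∪ X₂ whose restriction to X₁ equals d₁ and whose restriction to X₂ equals d₂. -/
/-!
Glue `X1` and `X2` along `A` by declaring the distance from `x : X1` to `y : X2` to be
`⨅ a, max (dist x (f a)) (dist (g a) y)`, the best one can do passing through `A` in a single
ultrametric step. Compactness of `A` makes this infimum a minimum, so every cross distance is
realised by some `a : A`, and then each case of the ultrametric inequality reduces to the
inequality in `X1` or `X2` (when two points of `X1` are compared through a point of `X2`, one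
moves across `A` using `dist (f a) (f b) = dist (g a) (g b)`). The result is a pseudometric in
which `f a` and `g a` are at distance zero; its separation quotient is the required space.
-/

open Set

instance IsUltrametricDist.separationQuotient {X : Type*} [PseudoMetricSpace X]
    [IsUltrametricDist X] : IsUltrametricDist (SeparationQuotient X) :=
  ⟨SeparationQuotient.surjective_mk.forall₃.2 fun x y z => by
    simpa only [SeparationQuotient.dist_mk] using dist_triangle_max x y z⟩

namespace UltrametricGluing

section Pseudo

variable {A X1 X2 : Type*} [PseudoMetricSpace X1] [PseudoMetricSpace X2]
  {f : A → X1} {g : A → X2}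

noncomputable def crossDist (f : A → X1) (g : A → X2) (x : X1) (y : X2) : ℝ :=
  ⨅ a, max (dist x (f a)) (dist (g a) y)

lemma crossDist_nonneg (x : X1) (y : X2) : 0 ≤ crossDist f g x y :=
  Real.iInf_nonneg fun _ => le_max_of_le_left dist_nonneg

lemma crossDist_le (x : X1) (y : X2) (a : A) :
    crossDist f g x y ≤ max (dist x (f a)) (dist (g a) y) :=
  ciInf_le ⟨0, forall_mem_range.2 fun _ => le_max_of_le_left dist_nonneg⟩ a

lemma crossDist_swap (x : X1) (y : X2) : crossDist g f y x = crossDist f g x y := by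
  unfold crossDist
  congr! 2 with a
  rw [max_comm, dist_comm, dist_comm y]

lemma crossDist_apply_self (a : A) : crossDist f g (f a) (g a) = 0 :=
  le_antisymm (by simpa using crossDist_le (f := f) (g := g) (f a) (g a) a) (crossDist_nonneg _ _)

variable (f g) in
noncomputable def glueDist : X1 ⊕ X2 → X1 ⊕ X2 → ℝ
  | .inl x, .inl y => dist x y
  | .inl x, .inr y => crossDist f g x y
  | .inr x, .inl y => crossDist f g y x
  | .inr x, .inr y => dist x y

lemma glueDist_nonneg (p q : X1 ⊕ X2) : 0 ≤ glueDist f g p q := by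
  rcases p with x | x <;> rcases q with y | y
  exacts [dist_nonneg, crossDist_nonneg x y, crossDist_nonneg y x, dist_nonneg]

lemma glueDist_comm (p q : X1 ⊕ X2) : glueDist f g p q = glueDist f g q p := by
  rcases p with x | x <;> rcases q with y | y
  exacts [dist_comm x y, rfl, rfl, dist_comm x y]

variable [PseudoMetricSpace A] [CompactSpace A] [Nonempty A]

lemma exists_crossDist_eq (hf : Continuous f) (hg : Continuous g) (x : X1) (y : X2) :
    ∃ a, crossDist f g x y = max (dist x (f a)) (dist (g a) y) := by
  have hc : Continuous fun a => max (dist x (f a)) (dist (g a) y) := by fun_prop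
  obtain ⟨a, -, ha⟩ := isCompact_univ.exists_isMinOn univ_nonempty hc.continuousOn
  exact ⟨a, le_antisymm (crossDist_le x y a) (le_ciInf fun b => ha (mem_univ b))⟩

lemma crossDist_le_max_dist_left [IsUltrametricDist X1] (hf : Continuous f) (hg : Continuous g)
    (x v : X1) (y : X2) : crossDist f g x y ≤ max (dist x v) (crossDist f g v y) := by
  obtain ⟨b, hb⟩ := exists_crossDist_eq hf hg v y
  calc crossDist f g x y ≤ max (dist x (f b)) (dist (g b) y) := crossDist_le x y b
    _ ≤ max (max (dist x v) (dist v (f b))) (dist (g b) y) := by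
      gcongr; exact dist_triangle_max x v (f b)
    _ = max (dist x v) (crossDist f g v y) := by rw [hb, max_assoc]

lemma crossDist_le_max_dist_right [IsUltrametricDist X2] (hf : Continuous f) (hg : Continuous g)
    (x : X1) (v y : X2) : crossDist f g x y ≤ max (crossDist f g x v) (dist v y) := by
  simpa only [crossDist_swap (f := f) (g := g), dist_comm, max_comm] using
    crossDist_le_max_dist_left hg hf y v x

lemma dist_le_max_crossDist_left [IsUltrametricDist X1] [IsUltrametricDist X2] (hf : Isometry f)
    (hg : Isometry g) (x y : X1) (v : X2) :
    dist x y ≤ max (crossDist f g x v) (crossDist f g y v) := by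
  obtain ⟨a, ha⟩ := exists_crossDist_eq hf.continuous hg.continuous x v
  obtain ⟨b, hb⟩ := exists_crossDist_eq hf.continuous hg.continuous y v
  have hA : dist (f a) (f b) ≤ max (dist (g a) v) (dist v (g b)) := by
    rw [hf.dist_eq, ← hg.dist_eq]; exact dist_triangle_max _ _ _
  calc dist x y ≤ max (dist x (f a)) (max (dist (f a) (f b)) (dist (f b) y)) :=
        (dist_triangle_max x (f a) y).trans (by gcongr; exact dist_triangle_max _ _ _)
    _ ≤ max (dist x (f a)) (max (max (dist (g a) v) (dist v (g b))) (dist (f b) y)) := by gcongr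
    _ = max (max (dist x (f a)) (dist (g a) v)) (max (dist y (f b)) (dist (g b) v)) := by
      rw [dist_comm v, dist_comm (f b)]; ac_rfl
    _ = max (crossDist f g x v) (crossDist f g y v) := by rw [ha, hb]

lemma dist_le_max_crossDist_right [IsUltrametricDist X1] [IsUltrametricDist X2] (hf : Isometry f)
    (hg : Isometry g) (v : X1) (x y : X2) :
    dist x y ≤ max (crossDist f g v x) (crossDist f g v y) := by
  simpa only [crossDist_swap (f := f) (g := g)] using dist_le_max_crossDist_left hg hf x y v

lemma glueDist_triangle_max [IsUltrametricDist X1] [IsUltrametricDist X2] (hf : Isometry f)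
    (hg : Isometry g) (p q r : X1 ⊕ X2) :
    glueDist f g p r ≤ max (glueDist f g p q) (glueDist f g q r) := by
  have hf' := hf.continuous
  have hg' := hg.continuous
  rcases p with x | x <;> rcases q with v | v <;> rcases r with y | y
  · exact dist_triangle_max x v y
  · exact crossDist_le_max_dist_left hf' hg' x v y
  · exact dist_le_max_crossDist_left hf hg x y v
  · exact crossDist_le_max_dist_right hf' hg' x v y
  · simpa only [glueDist, dist_comm, max_comm] using crossDist_le_max_dist_left hf' hg' y v x
  · exact dist_le_max_crossDist_right hf hg v x y
  · simpa only [glueDist, dist_comm, max_comm] using crossDist_le_max_dist_right hf' hg' y v x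
  · exact dist_triangle_max x v y

/- Indexing the carrier by the isometries lets `glueDist f g` be an instance on it. -/
@[nolint unusedArguments]
def GlueSum (_hf : Isometry f) (_hg : Isometry g) : Type _ := X1 ⊕ X2

variable [IsUltrametricDist X1] [IsUltrametricDist X2] {hf : Isometry f} {hg : Isometry g}

noncomputable instance : PseudoMetricSpace (GlueSum hf hg) where
  dist := glueDist f g
  dist_self p := by rcases p with x | x <;> exact dist_self x
  dist_comm := glueDist_comm
  dist_triangle p q r := (glueDist_triangle_max hf hg p q r).trans <|
    max_le_add_of_nonneg (glueDist_nonneg p q) (glueDist_nonneg q r)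

instance : IsUltrametricDist (GlueSum hf hg) := ⟨glueDist_triangle_max hf hg⟩

variable (hf hg)

noncomputable def toGlueL (x : X1) : SeparationQuotient (GlueSum hf hg) := .mk (Sum.inl x)

noncomputable def toGlueR (y : X2) : SeparationQuotient (GlueSum hf hg) := .mk (Sum.inr y)

lemma isometry_toGlueL : Isometry (toGlueL hf hg) := .of_dist_eq fun _ _ => rfl

lemma isometry_toGlueR : Isometry (toGlueR hf hg) := .of_dist_eq fun _ _ => rfl

lemma toGlueL_apply_eq_toGlueR_apply (a : A) : toGlueL hf hg (f a) = toGlueR hf hg (g a) :=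
  SeparationQuotient.mk_eq_mk.2 <| Metric.inseparable_iff.2 <| crossDist_apply_self a

lemma range_toGlueL_union_range_toGlueR :
    range (toGlueL hf hg) ∪ range (toGlueR hf hg) = univ := by
  refine eq_univ_of_forall fun z => ?_
  obtain ⟨x | y, rfl⟩ := SeparationQuotient.surjective_mk z
  exacts [Or.inl ⟨x, rfl⟩, Or.inr ⟨y, rfl⟩]

end Pseudo

section Metric

variable {A X1 X2 : Type*} [PseudoMetricSpace A] [CompactSpace A] [Nonempty A] [MetricSpace X1]
  [MetricSpace X2] {f : A → X1} {g : A → X2}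

lemma crossDist_eq_zero_iff (hf : Continuous f) (hg : Continuous g) {x : X1} {y : X2} :
    crossDist f g x y = 0 ↔ ∃ a, f a = x ∧ g a = y := by
  refine ⟨fun h => ?_, fun ⟨a, hx, hy⟩ => hx ▸ hy ▸ crossDist_apply_self a⟩
  obtain ⟨a, ha⟩ := exists_crossDist_eq hf hg x y
  obtain ⟨hx, hy⟩ := max_le_iff.1 (h ▸ ha).symm.le
  exact ⟨a, (dist_le_zero.1 hx).symm, dist_le_zero.1 hy⟩

variable [IsUltrametricDist X1] [IsUltrametricDist X2] (hf : Isometry f) (hg : Isometry g)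

lemma toGlueL_eq_toGlueR_iff {x : X1} {y : X2} :
    toGlueL hf hg x = toGlueR hf hg y ↔ ∃ a, f a = x ∧ g a = y :=
  SeparationQuotient.mk_eq_mk.trans <| Metric.inseparable_iff.trans <|
    crossDist_eq_zero_iff hf.continuous hg.continuous

lemma range_toGlueL_inter_range_toGlueR :
    range (toGlueL hf hg) ∩ range (toGlueR hf hg) = range (toGlueL hf hg ∘ f) := by
  ext z
  constructor
  · rintro ⟨⟨x, rfl⟩, y, hy⟩
    obtain ⟨a, rfl, -⟩ := (toGlueL_eq_toGlueR_iff hf hg).1 hy.symm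
    exact ⟨a, rfl⟩
  · rintro ⟨a, rfl⟩
    exact ⟨⟨f a, rfl⟩, g a, (toGlueL_apply_eq_toGlueR_apply hf hg a).symm⟩

end Metric

end UltrametricGluing

open UltrametricGluing in
/-- Two ultrametric spaces sharing a common nonempty compact part `A` can be glued:
there is an ultrametric space `Z` containing isometric copies of `X₁` and `X₂`
which agree exactly on the copy of `A`, and `Z = X₁ ∪ X₂`. -/
theorem ultrametric_amalgam_exists (A X1 X2 : Type) [MetricSpace A] [MetricSpace X1]
    [MetricSpace X2] [CompactSpace A] [Nonempty A]
    [IsUltrametricDist X1] [IsUltrametricDist X2]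
    (f : A → X1) (g : A → X2) (hf : Isometry f) (hg : Isometry g) :
    ∃ (Z : Type) (_ : MetricSpace Z), IsUltrametricDist Z ∧
      ∃ (i : X1 → Z) (j : X2 → Z), Isometry i ∧ Isometry j ∧
        (∀ a : A, i (f a) = j (g a)) ∧
        Set.range i ∪ Set.range j = Set.univ ∧
        Set.range i ∩ Set.range j = Set.range (fun a : A => i (f a)) :=
  ⟨SeparationQuotient (GlueSum hf hg), inferInstance, inferInstance, toGlueL hf hg, toGlueR hf hg,
    isometry_toGlueL hf hg, isometry_toGlueR hf hg, toGlueL_apply_eq_toGlueR_apply hf hg,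
    range_toGlueL_union_range_toGlueR hf hg, range_toGlueL_inter_range_toGlueR hf hg⟩
end

section
/- Define the ultrametric Gromov–Hausdorff distance between compact ultrametric spaces X and Y as ρ_GHu(X,Y) = inf { d_H(i(X), j(Y)) : i : X → Z and j : Y → Z isometric embeddings into an ultrametric space Z }. Then ρ_GHu satisfies the strong triangle inequality ρ_GHu(X₁,X₃) ≤ max(ρ_GHu(X₁,X₂), ρ_GHu(X₂,X₃)) for all compact ultrametric spaces X₁, X₂, X₃. -/
/-!
Given ultrametric spaces `Z ⊇ X₁ ∪ X₂` and `W ⊇ X₂ ∪ X₃`, glue `Z` and `W` along the two copies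
of `X₂` by `d(z, w) = inf_p max (d(z, p), d(p, w))` (the ultrametric analogue of the usual gluing
with `d(z, p) + d(p, w)`), then identify points at distance zero. Compactness of `X₂` makes the
infimum attained, which is what the strong triangle inequality of the glued pseudometric needs.
In the glued space each point of `X₁` is within `max (d_H(X₁, X₂), d_H(X₂, X₃))` of `X₃`, passing
through a nearest point of `X₂`, and conversely.
-/

/-- The ultrametric Gromov–Hausdorff distance: infimum of Hausdorff distances between
isometric copies of `X` and `Y` inside a common ultrametric space. -/
noncomputable def GHuDist (X Y : Type*) [MetricSpace X] [MetricSpace Y] : ℝ :=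
  sInf { r : ℝ | ∃ (Z : Type) (_ : MetricSpace Z), IsUltrametricDist Z ∧
    ∃ (i : X → Z) (j : Y → Z), Isometry i ∧ Isometry j ∧
      Metric.hausdorffDist (Set.range i) (Set.range j) = r }

open Metric Set

theorem IsCompact.exists_dist_le_hausdorffDist {α : Type*} [PseudoMetricSpace α]
    {s t : Set α} (hs : IsCompact s) (ht : IsCompact t) (htne : t.Nonempty) {x : α}
    (hx : x ∈ s) : ∃ y ∈ t, dist x y ≤ hausdorffDist s t := by
  obtain ⟨y, hy, hxy⟩ := ht.exists_infDist_eq_dist htne x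
  refine ⟨y, hy, hxy ▸ infDist_le_hausdorffDist_of_mem hx ?_⟩
  exact hausdorffEDist_ne_top_of_nonempty_of_bounded ⟨x, hx⟩ htne hs.isBounded ht.isBounded

instance SeparationQuotient.instIsUltrametricDist {X : Type*} [PseudoMetricSpace X]
    [IsUltrametricDist X] : IsUltrametricDist (SeparationQuotient X) :=
  ⟨SeparationQuotient.surjective_mk.forall₃.2 dist_triangle_max⟩

namespace UltraGlue

variable {K Z W : Type*} [PseudoMetricSpace Z] [PseudoMetricSpace W]

noncomputable def crossDist (i : K → Z) (j : K → W) (z : Z) (w : W) : ℝ :=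
  ⨅ p, max (dist z (i p)) (dist (j p) w)

theorem crossDist_nonneg (i : K → Z) (j : K → W) (z : Z) (w : W) : 0 ≤ crossDist i j z w :=
  Real.iInf_nonneg fun _ => le_max_of_le_left dist_nonneg

theorem crossDist_le (i : K → Z) (j : K → W) (z : Z) (w : W) (p : K) :
    crossDist i j z w ≤ max (dist z (i p)) (dist (j p) w) :=
  ciInf_le ⟨0, by rintro r ⟨q, rfl⟩; positivity⟩ p

theorem crossDist_swap (i : K → Z) (j : K → W) (z : Z) (w : W) :
    crossDist j i w z = crossDist i j z w :=
  iInf_congr fun p => by rw [dist_comm w, dist_comm (i p), max_comm]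

variable (i : K → Z) (j : K → W) in
noncomputable def glueDist : Z ⊕ W → Z ⊕ W → ℝ
  | .inl z, .inl z' => dist z z'
  | .inl z, .inr w => crossDist i j z w
  | .inr w, .inl z => crossDist i j z w
  | .inr w, .inr w' => dist w w'

variable {i : K → Z} {j : K → W}

theorem glueDist_nonneg : ∀ x y, 0 ≤ glueDist i j x y
  | .inl _, .inl _ | .inr _, .inr _ => dist_nonneg
  | .inl _, .inr _ | .inr _, .inl _ => crossDist_nonneg i j _ _

variable [PseudoMetricSpace K] [CompactSpace K] [Nonempty K]

theorem exists_crossDist_eq (hi : Continuous i) (hj : Continuous j) (z : Z) (w : W) :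
    ∃ p, crossDist i j z w = max (dist z (i p)) (dist (j p) w) := by
  obtain ⟨p, -, hp⟩ := isCompact_univ.exists_isMinOn univ_nonempty
    ((continuous_const.dist hi).max (hj.dist continuous_const)).continuousOn
  exact ⟨p, le_antisymm (crossDist_le i j z w p) (le_ciInf fun q => hp (mem_univ q))⟩

theorem crossDist_le_max_dist_crossDist [IsUltrametricDist Z] (hi : Continuous i)
    (hj : Continuous j) (z z' : Z) (w : W) :
    crossDist i j z w ≤ max (dist z z') (crossDist i j z' w) := by
  obtain ⟨p, hp⟩ := exists_crossDist_eq hi hj z' w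
  calc crossDist i j z w ≤ max (dist z (i p)) (dist (j p) w) := crossDist_le i j z w p
    _ ≤ max (max (dist z z') (dist z' (i p))) (dist (j p) w) :=
      max_le_max_right _ (dist_triangle_max z z' (i p))
    _ = max (dist z z') (crossDist i j z' w) := by rw [hp, max_assoc]

theorem crossDist_le_max_crossDist_dist [IsUltrametricDist W] (hi : Continuous i)
    (hj : Continuous j) (z : Z) (w w' : W) :
    crossDist i j z w' ≤ max (crossDist i j z w) (dist w w') := by
  rw [← crossDist_swap, ← crossDist_swap i, dist_comm, max_comm]
  exact crossDist_le_max_dist_crossDist hj hi w' w z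

variable [IsUltrametricDist Z] [IsUltrametricDist W]

theorem dist_le_max_crossDist_left (hi : Isometry i) (hj : Isometry j) (z z' : Z) (w : W) :
    dist z z' ≤ max (crossDist i j z w) (crossDist i j z' w) := by
  obtain ⟨p, hp⟩ := exists_crossDist_eq hi.continuous hj.continuous z w
  obtain ⟨q, hq⟩ := exists_crossDist_eq hi.continuous hj.continuous z' w
  have hpq : dist (i p) (i q) ≤ max (dist (j p) w) (dist (j q) w) := by
    rw [hi.dist_eq, ← hj.dist_eq, dist_comm (j q)]
    exact dist_triangle_max _ _ _
  calc dist z z' ≤ max (dist z (i p)) (max (dist (i p) (i q)) (dist (i q) z')) :=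
        (dist_triangle_max _ _ _).trans (max_le_max_left _ (dist_triangle_max _ _ _))
    _ ≤ max (crossDist i j z w) (crossDist i j z' w) := by
      rw [hp, hq, dist_comm (i q)]
      refine max_le (le_max_of_le_left (le_max_left _ _)) (max_le (hpq.trans ?_) ?_)
      · exact max_le_max (le_max_right _ _) (le_max_right _ _)
      · exact le_max_of_le_right (le_max_left _ _)

theorem dist_le_max_crossDist_right (hi : Isometry i) (hj : Isometry j) (z : Z) (w w' : W) :
    dist w w' ≤ max (crossDist i j z w) (crossDist i j z w') := by
  rw [← crossDist_swap, ← crossDist_swap i]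
  exact dist_le_max_crossDist_left hj hi w w' z

theorem glueDist_triangle_max (hi : Isometry i) (hj : Isometry j) :
    ∀ x y z, glueDist i j x z ≤ max (glueDist i j x y) (glueDist i j y z)
  | .inl a, .inl b, .inl c => dist_triangle_max a b c
  | .inl a, .inl b, .inr c => crossDist_le_max_dist_crossDist hi.continuous hj.continuous a b c
  | .inl a, .inr b, .inl c => dist_le_max_crossDist_left hi hj a c b
  | .inl a, .inr b, .inr c => crossDist_le_max_crossDist_dist hi.continuous hj.continuous a b c
  | .inr a, .inl b, .inl c =>
    (crossDist_le_max_dist_crossDist hi.continuous hj.continuous c b a).trans_eq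
      (by rw [dist_comm, max_comm]; rfl)
  | .inr a, .inl b, .inr c => dist_le_max_crossDist_right hi hj b a c
  | .inr a, .inr b, .inl c =>
    (crossDist_le_max_crossDist_dist hi.continuous hj.continuous c b a).trans_eq
      (by rw [dist_comm, max_comm]; rfl)
  | .inr a, .inr b, .inr c => dist_triangle_max a b c

/-- A synonym for `Z ⊕ W`, which already carries the sum metric. -/
def PreSpace (_ : Isometry i) (_ : Isometry j) : Type _ := Z ⊕ W

variable (hi : Isometry i) (hj : Isometry j)

noncomputable instance : PseudoMetricSpace (PreSpace hi hj) where
  dist := glueDist i j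
  dist_self x := by cases x <;> simp only [glueDist, dist_self]
  dist_comm x y := by cases x <;> cases y <;> simp only [glueDist, dist_comm]
  dist_triangle x y z := (glueDist_triangle_max hi hj x y z).trans <|
    max_le_add_of_nonneg (glueDist_nonneg x y) (glueDist_nonneg y z)

instance : IsUltrametricDist (PreSpace hi hj) := ⟨glueDist_triangle_max hi hj⟩

abbrev Space : Type _ := SeparationQuotient (PreSpace hi hj)

noncomputable def toGlueL (z : Z) : Space hi hj := SeparationQuotient.mk (.inl z)

noncomputable def toGlueR (w : W) : Space hi hj := SeparationQuotient.mk (.inr w)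

theorem isometry_toGlueL : Isometry (toGlueL hi hj) := Isometry.of_dist_eq fun _ _ => rfl

theorem isometry_toGlueR : Isometry (toGlueR hi hj) := Isometry.of_dist_eq fun _ _ => rfl

theorem dist_toGlueL_toGlueR_le (z : Z) (w : W) (p : K) :
    dist (toGlueL hi hj z) (toGlueR hi hj w) ≤ max (dist z (i p)) (dist (j p) w) :=
  crossDist_le i j z w p

theorem hausdorffDist_toGlueL_toGlueR_le {X Y : Type*} [PseudoMetricSpace X]
    [PseudoMetricSpace Y] [CompactSpace X] [CompactSpace Y] [Nonempty X] [Nonempty Y]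
    {f : X → Z} {g : Y → W} (hf : Continuous f) (hg : Continuous g) :
    hausdorffDist (range (toGlueL hi hj ∘ f)) (range (toGlueR hi hj ∘ g)) ≤
      max (hausdorffDist (range f) (range i)) (hausdorffDist (range j) (range g)) := by
  have hX := isCompact_range hf
  have hY := isCompact_range hg
  have hKZ := isCompact_range hi.continuous
  have hKW := isCompact_range hj.continuous
  refine hausdorffDist_le_of_mem_dist (le_max_of_le_left hausdorffDist_nonneg) ?_ ?_
  · rintro _ ⟨x, rfl⟩
    obtain ⟨_, ⟨p, rfl⟩, hxp⟩ :=
      hX.exists_dist_le_hausdorffDist hKZ (range_nonempty i) (mem_range_self x)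
    obtain ⟨_, ⟨y, rfl⟩, hpy⟩ :=
      hKW.exists_dist_le_hausdorffDist hY (range_nonempty g) (mem_range_self p)
    exact ⟨_, mem_range_self y, (dist_toGlueL_toGlueR_le hi hj _ _ p).trans (max_le_max hxp hpy)⟩
  · rintro _ ⟨y, rfl⟩
    obtain ⟨_, ⟨p, rfl⟩, hyp⟩ :=
      hY.exists_dist_le_hausdorffDist hKW (range_nonempty j) (mem_range_self y)
    obtain ⟨_, ⟨x, rfl⟩, hpx⟩ :=
      hKZ.exists_dist_le_hausdorffDist hX (range_nonempty f) (mem_range_self p)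
    refine ⟨_, mem_range_self x, (dist_comm _ _).trans_le ?_⟩
    refine (dist_toGlueL_toGlueR_le hi hj _ _ p).trans (max_le_max ?_ ?_)
    · rwa [dist_comm, hausdorffDist_comm]
    · rwa [dist_comm, hausdorffDist_comm]

end UltraGlue

theorem GHuDist_le_hausdorffDist {X Y Z : Type} [MetricSpace X] [MetricSpace Y] [MetricSpace Z]
    [IsUltrametricDist Z] {i : X → Z} {j : Y → Z} (hi : Isometry i) (hj : Isometry j) :
    GHuDist X Y ≤ hausdorffDist (range i) (range j) :=
  csInf_le ⟨0, by rintro r ⟨-, -, -, -, -, -, -, rfl⟩; exact hausdorffDist_nonneg⟩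
    ⟨Z, _, ‹_›, i, j, hi, hj, rfl⟩

theorem exists_hausdorffDist_lt_of_GHuDist_lt {X Y : Type} [MetricSpace X] [MetricSpace Y]
    [Nonempty X] [Nonempty Y] [IsUltrametricDist X] [IsUltrametricDist Y] {r : ℝ}
    (h : GHuDist X Y < r) :
    ∃ (Z : Type) (_ : MetricSpace Z) (_ : IsUltrametricDist Z) (i : X → Z) (j : Y → Z),
      Isometry i ∧ Isometry j ∧ hausdorffDist (range i) (range j) < r := by
  obtain ⟨x⟩ := ‹Nonempty X›
  obtain ⟨y⟩ := ‹Nonempty Y›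
  have hx : Isometry fun _ : Unit => x := isometry_subsingleton
  have hy : Isometry fun _ : Unit => y := isometry_subsingleton
  refine (exists_lt_of_csInf_lt ?_ h).elim
    fun _ ⟨⟨Z, _, hZ, i, j, hi, hj, hr⟩, hlt⟩ => ⟨Z, _, hZ, i, j, hi, hj, hr ▸ hlt⟩
  exact ⟨_, UltraGlue.Space hx hy, _, inferInstance, _, _, UltraGlue.isometry_toGlueL hx hy,
      UltraGlue.isometry_toGlueR hx hy, rfl⟩

/-- The ultrametric Gromov–Hausdorff distance satisfies the strong triangle inequality. -/
theorem GHuDist_strong_triangle (X1 X2 X3 : Type) [MetricSpace X1] [MetricSpace X2]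
    [MetricSpace X3] [CompactSpace X1] [CompactSpace X2] [CompactSpace X3]
    [Nonempty X1] [Nonempty X2] [Nonempty X3]
    [IsUltrametricDist X1] [IsUltrametricDist X2] [IsUltrametricDist X3] :
    GHuDist X1 X3 ≤ max (GHuDist X1 X2) (GHuDist X2 X3) := by
  refine le_of_forall_pos_le_add fun ε hε => ?_
  obtain ⟨Z, _, _, f1, f2, hf1, hf2, h12⟩ :=
    exists_hausdorffDist_lt_of_GHuDist_lt (lt_add_of_pos_right (GHuDist X1 X2) hε)
  obtain ⟨W, _, _, g2, g3, hg2, hg3, h23⟩ :=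
    exists_hausdorffDist_lt_of_GHuDist_lt (lt_add_of_pos_right (GHuDist X2 X3) hε)
  calc GHuDist X1 X3
      ≤ hausdorffDist (range (UltraGlue.toGlueL hf2 hg2 ∘ f1))
          (range (UltraGlue.toGlueR hf2 hg2 ∘ g3)) :=
        GHuDist_le_hausdorffDist ((UltraGlue.isometry_toGlueL hf2 hg2).comp hf1)
          ((UltraGlue.isometry_toGlueR hf2 hg2).comp hg3)
    _ ≤ max (hausdorffDist (range f1) (range f2)) (hausdorffDist (range g2) (range g3)) :=
        UltraGlue.hausdorffDist_toGlueL_toGlueR_le hf2 hg2 hf1.continuous hg3.continuous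
    _ ≤ max (GHuDist X1 X2 + ε) (GHuDist X2 X3 + ε) := max_le_max h12.le h23.le
    _ = max (GHuDist X1 X2) (GHuDist X2 X3) + ε := max_add_add_right _ _ _
end

section
/- For c ∈ ℝ with c > 0, let X_c be the two-point metric space {a₁,a₂} with d(a₁,a₂) = c. If 1/2 ≤ c₁ < c₂ ≤ 1, then ρ_GHu(X_{c₁}, X_{c₂}) ≥ 1/4. -/
/-!
If the Hausdorff distance between copies of `X_{c₁}` and `X_{c₂}` in an ultrametric space were
below `1/4`, the two points of each copy would be `1/4`-close to distinct points of the other.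
In an ultrametric space moving both ends of a segment by less than its length does not change
the length, so `c₁ = c₂`. The defining infimum is over a nonempty set because two ultrametric
spaces of diameter at most `r > 0` glue to an ultrametric space on their disjoint union, with all
cross distances equal to `r`.
-/

open Metric Set

theorem IsUltrametricDist.dist_eq_of_dist_lt {Z : Type*} [PseudoMetricSpace Z]
    [IsUltrametricDist Z] {p₁ p₂ q₁ q₂ : Z} (h₁ : dist p₁ q₁ < dist p₁ p₂)
    (h₂ : dist p₂ q₂ < dist p₁ p₂) : dist q₁ q₂ = dist p₁ p₂ := by
  have hq₁p₂ : dist q₁ p₂ = dist p₁ p₂ := by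
    rw [dist_eq_max_of_dist_ne_dist q₁ p₁ p₂ (by rw [dist_comm]; exact h₁.ne),
      dist_comm q₁, max_eq_right h₁.le]
  rw [dist_eq_max_of_dist_ne_dist q₁ p₂ q₂ (by rw [hq₁p₂]; exact h₂.ne'), hq₁p₂,
    max_eq_left h₂.le]

theorem finite_of_forall_eq_or_eq {X : Type*} {a₁ a₂ : X} (hX : ∀ x : X, x = a₁ ∨ x = a₂) :
    Finite X :=
  Finite.of_surjective (fun b : Bool => bif b then a₁ else a₂) fun x =>
    (hX x).elim (fun h => ⟨true, h.symm⟩) fun h => ⟨false, h.symm⟩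

section TwoPoint

variable {X : Type*} [MetricSpace X] {a₁ a₂ : X}

theorem dist_eq_zero_or_eq_of_forall_eq_or_eq (hX : ∀ x : X, x = a₁ ∨ x = a₂) (x y : X) :
    dist x y = 0 ∨ dist x y = dist a₁ a₂ := by
  rcases hX x with rfl | rfl <;> rcases hX y with rfl | rfl <;> simp [dist_comm]

theorem dist_le_of_forall_eq_or_eq (hX : ∀ x : X, x = a₁ ∨ x = a₂) (x y : X) :
    dist x y ≤ dist a₁ a₂ := by
  rcases dist_eq_zero_or_eq_of_forall_eq_or_eq hX x y with h | h <;> simp [h]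

theorem isUltrametricDist_of_forall_eq_or_eq (hX : ∀ x : X, x = a₁ ∨ x = a₂) :
    IsUltrametricDist X where
  dist_triangle_max x y z := by
    rcases hX x with rfl | rfl <;> rcases hX y with rfl | rfl <;> rcases hX z with rfl | rfl <;>
      simp [dist_comm]

end TwoPoint

namespace Sum

variable {X Y : Type*} [MetricSpace X] [MetricSpace Y]

def constGlueDist (r : ℝ) : X ⊕ Y → X ⊕ Y → ℝ
  | inl x, inl x' => dist x x'
  | inr y, inr y' => dist y y'
  | _, _ => r

variable {r : ℝ}

theorem constGlueDist_triangle_max [IsUltrametricDist X] [IsUltrametricDist Y]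
    (hX : ∀ x x' : X, dist x x' ≤ r) (hY : ∀ y y' : Y, dist y y' ≤ r) (p q s : X ⊕ Y) :
    constGlueDist r p s ≤ max (constGlueDist r p q) (constGlueDist r q s) := by
  rcases p with x | y <;> rcases q with x' | y' <;> rcases s with x'' | y'' <;>
    simp only [constGlueDist, le_max_left, le_max_right, max_self, hX, hY]
  · exact dist_triangle_max x x' x''
  · exact dist_triangle_max y y' y''

theorem constGlueDist_nonneg (hr : 0 ≤ r) (p q : X ⊕ Y) : 0 ≤ constGlueDist r p q := by
  rcases p with x | y <;> rcases q with x' | y' <;> simp [constGlueDist, hr]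

abbrev constGlueMetricSpace [IsUltrametricDist X] [IsUltrametricDist Y] (hr : 0 < r)
    (hX : ∀ x x' : X, dist x x' ≤ r) (hY : ∀ y y' : Y, dist y y' ≤ r) :
    MetricSpace (X ⊕ Y) where
  dist := constGlueDist r
  dist_self := by rintro (x | y) <;> simp [constGlueDist]
  dist_comm := by rintro (x | y) (x' | y') <;> simp [constGlueDist, dist_comm]
  dist_triangle p q s := (constGlueDist_triangle_max hX hY p q s).trans
    (max_le_add_of_nonneg (constGlueDist_nonneg hr.le p q) (constGlueDist_nonneg hr.le q s))
  eq_of_dist_eq_zero {p q} h := by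
    rcases p with x | y <;> rcases q with x' | y' <;>
      simp_all [constGlueDist, hr.ne', dist_eq_zero]

end Sum

theorem le_GHuDist {X Y : Type} [MetricSpace X] [MetricSpace Y] [IsUltrametricDist X]
    [IsUltrametricDist Y] {r s : ℝ} (hr : 0 < r) (hX : ∀ x x' : X, dist x x' ≤ r)
    (hY : ∀ y y' : Y, dist y y' ≤ r)
    (h : ∀ (Z : Type) [MetricSpace Z] [IsUltrametricDist Z] (i : X → Z) (j : Y → Z),
      Isometry i → Isometry j → s ≤ hausdorffDist (range i) (range j)) :
    s ≤ GHuDist X Y := by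
  let _ := Sum.constGlueMetricSpace hr hX hY
  have hglue : IsUltrametricDist (X ⊕ Y) := ⟨Sum.constGlueDist_triangle_max hX hY⟩
  refine le_csInf ⟨_, X ⊕ Y, _, hglue, Sum.inl, Sum.inr, Isometry.of_dist_eq fun _ _ => rfl,
    Isometry.of_dist_eq fun _ _ => rfl, rfl⟩ ?_
  rintro _ ⟨Z, _, hZ, i, j, hi, hj, rfl⟩
  exact h Z i j hi hj

theorem GHuDist_two_point_spaces_general (X Y : Type) [MetricSpace X] [MetricSpace Y]
    (c1 c2 : ℝ)
    (a1 a2 : X) (hda : dist a1 a2 = c1) (hXtwo : ∀ x : X, x = a1 ∨ x = a2)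
    (b1 b2 : Y) (hdb : dist b1 b2 = c2) (hYtwo : ∀ y : Y, y = b1 ∨ y = b2)
    (hc1 : 1/2 ≤ c1) (hlt : c1 < c2) :
    1/4 ≤ GHuDist X Y := by
  have := isUltrametricDist_of_forall_eq_or_eq hXtwo
  have := isUltrametricDist_of_forall_eq_or_eq hYtwo
  have := finite_of_forall_eq_or_eq hXtwo
  have := finite_of_forall_eq_or_eq hYtwo
  have hXc (x x' : X) : dist x x' ≤ c2 :=
    (dist_le_of_forall_eq_or_eq hXtwo x x').trans (hda.trans_le hlt.le)
  have hYc (y y' : Y) : dist y y' ≤ c2 := (dist_le_of_forall_eq_or_eq hYtwo y y').trans hdb.le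
  refine le_GHuDist (by linarith) hXc hYc fun Z _ _ i j hi hj => ?_
  by_contra! hH
  have hfin : hausdorffEDist (range i) (range j) ≠ ⊤ :=
    hausdorffEDist_ne_top_of_nonempty_of_bounded ⟨_, mem_range_self a1⟩ ⟨_, mem_range_self b1⟩
      (finite_range i).isBounded (finite_range j).isBounded
  obtain ⟨_, ⟨y₁, rfl⟩, hy₁⟩ := exists_dist_lt_of_hausdorffDist_lt (mem_range_self a1) hH hfin
  obtain ⟨_, ⟨y₂, rfl⟩, hy₂⟩ := exists_dist_lt_of_hausdorffDist_lt (mem_range_self a2) hH hfin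
  have hy : dist y₁ y₂ = c1 := by
    rw [← hj.dist_eq, ← hda, ← hi.dist_eq]
    exact IsUltrametricDist.dist_eq_of_dist_lt (by rw [hi.dist_eq]; linarith)
      (by rw [hi.dist_eq]; linarith)
  rcases dist_eq_zero_or_eq_of_forall_eq_or_eq hYtwo y₁ y₂ with h | h <;> linarith

/-- Two-point spaces with distances c₁ ≠ c₂ in [1/2,1] are at ultrametric
Gromov–Hausdorff distance at least 1/4. -/
theorem GHuDist_two_point_spaces (X Y : Type) [MetricSpace X] [MetricSpace Y]
    (c1 c2 : ℝ)
    (a1 a2 : X) (ha : a1 ≠ a2) (hda : dist a1 a2 = c1) (hXtwo : ∀ x : X, x = a1 ∨ x = a2)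
    (b1 b2 : Y) (hb : b1 ≠ b2) (hdb : dist b1 b2 = c2) (hYtwo : ∀ y : Y, y = b1 ∨ y = b2)
    (hc1 : 1/2 ≤ c1) (hlt : c1 < c2) (hc2 : c2 ≤ 1) :
    1/4 ≤ GHuDist X Y :=
  GHuDist_two_point_spaces_general X Y c1 c2 a1 a2 hda hXtwo b1 b2 hdb hYtwo hc1 hlt
end

section
/- Let K ⊆ ℝ≥0 with 0 ∈ K. Let X, Xᵢ be compact ultrametric spaces embedded in a common ultrametric space Z, with all distances in Xᵢ belonging to K. If a, b ∈ X satisfy d_H(X, Xᵢ) < d(a,b)/2, then d(a,b) ∈ K. Consequently, the set U(K) of compact ultrametric spaces whose metrics take values in K is closed in (U, ρ_GHu). -/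
/-- The product of two ultrametric spaces (with the sup metric) is ultrametric. -/
lemma ultra_prod {A B : Type*} [MetricSpace A] [MetricSpace B]
    [IsUltrametricDist A] [IsUltrametricDist B] : IsUltrametricDist (A × B) := by
  constructor
  intro x y z
  simp only [Prod.dist_eq]
  refine max_le ?_ ?_
  · exact (IsUltrametricDist.dist_triangle_max x.1 y.1 z.1).trans
      (max_le_max (le_max_left _ _) (le_max_left _ _))
  · exact (IsUltrametricDist.dist_triangle_max x.2 y.2 z.2).trans
      (max_le_max (le_max_right _ _) (le_max_right _ _))

/-- The GHu set of Hausdorff distances is nonempty for nonempty spaces. -/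
lemma GHu_set_nonempty (A B : Type) [MetricSpace A] [MetricSpace B]
    [IsUltrametricDist A] [IsUltrametricDist B] [Nonempty A] [Nonempty B] :
    { r : ℝ | ∃ (Z : Type) (_ : MetricSpace Z), IsUltrametricDist Z ∧
      ∃ (i : A → Z) (j : B → Z), Isometry i ∧ Isometry j ∧
        Metric.hausdorffDist (Set.range i) (Set.range j) = r }.Nonempty := by
  obtain ⟨a0⟩ := ‹Nonempty A›
  obtain ⟨b0⟩ := ‹Nonempty B›
  refine ⟨_, A × B, inferInstance, ultra_prod, fun a => (a, b0), fun b => (a0, b), ?_, ?_, rfl⟩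
  · refine Isometry.of_dist_eq fun x y => ?_
    simp [Prod.dist_eq, dist_nonneg]
  · refine Isometry.of_dist_eq fun x y => ?_
    simp [Prod.dist_eq, dist_nonneg]

/-- If a compact set `Xi` with distances in `K` is Hausdorff-close to `X` inside an
ultrametric space, then the (large enough) distances in `X` also lie in `K`;
consequently the class `U(K)` of compact ultrametric spaces with distances in `K` is
closed under ultrametric Gromov-Hausdorff limits. -/
theorem UK_closed (K : Set ℝ) (h0 : (0:ℝ) ∈ K) :
    (∀ (Z : Type) [MetricSpace Z] [IsUltrametricDist Z] (X Xi : Set Z),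
      X.Nonempty → IsCompact X → Xi.Nonempty → IsCompact Xi →
      (∀ p ∈ Xi, ∀ q ∈ Xi, dist p q ∈ K) →
      ∀ a ∈ X, ∀ b ∈ X, Metric.hausdorffDist X Xi < dist a b / 2 → dist a b ∈ K)
    ∧
    (∀ (X : Type) [MetricSpace X] [IsUltrametricDist X] [CompactSpace X] [Nonempty X]
      (Y : ℕ → Type) (m : ∀ n, MetricSpace (Y n)),
      (∀ n, letI := m n; IsUltrametricDist (Y n) ∧ CompactSpace (Y n) ∧ Nonempty (Y n)) →
      (∀ n, letI := m n; ∀ p q : Y n, dist p q ∈ K) →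
      Filter.Tendsto (fun n => letI := m n; GHuDist X (Y n)) Filter.atTop (nhds 0) →
      ∀ p q : X, dist p q ∈ K) := by
  have part1 : ∀ (Z : Type) [MetricSpace Z] [IsUltrametricDist Z] (X Xi : Set Z),
      X.Nonempty → IsCompact X → Xi.Nonempty → IsCompact Xi →
      (∀ p ∈ Xi, ∀ q ∈ Xi, dist p q ∈ K) →
      ∀ a ∈ X, ∀ b ∈ X, Metric.hausdorffDist X Xi < dist a b / 2 → dist a b ∈ K := by
    intro Z _ _ X Xi hXne hXc hXine hXic hK a ha b hb hd
    have hfin : EMetric.hausdorffEdist X Xi ≠ ⊤ :=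
      Metric.hausdorffEdist_ne_top_of_nonempty_of_bounded hXne hXine
        hXc.isBounded hXic.isBounded
    obtain ⟨a', ha', haa'⟩ := Metric.exists_dist_lt_of_hausdorffDist_lt ha hd hfin
    obtain ⟨b', hb', hbb'⟩ := Metric.exists_dist_lt_of_hausdorffDist_lt hb hd hfin
    have hdpos : 0 < dist a b / 2 := lt_of_le_of_lt Metric.hausdorffDist_nonneg hd
    have hhalf : dist a b / 2 ≤ dist a b := by linarith
    -- d(a', b') = d(a, b)
    have hle : dist a' b' ≤ dist a b := by
      calc dist a' b' ≤ max (dist a' a) (dist a b') :=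
            IsUltrametricDist.dist_triangle_max a' a b'
        _ ≤ max (dist a' a) (max (dist a b) (dist b b')) := by
            exact max_le_max le_rfl (IsUltrametricDist.dist_triangle_max a b b')
        _ ≤ dist a b := by
            rw [dist_comm a' a]
            refine max_le (le_trans haa'.le hhalf) (max_le le_rfl (le_trans hbb'.le hhalf))
    have hge : dist a b ≤ dist a' b' := by
      by_contra hlt
      push_neg at hlt
      have h1 : dist a b ≤ max (dist a a') (dist a' b) :=
        IsUltrametricDist.dist_triangle_max a a' b
      have h2 : dist a' b ≤ max (dist a' b') (dist b' b) :=
        IsUltrametricDist.dist_triangle_max a' b' b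
      have : dist a b < dist a b := by
        have hbb : dist b' b < dist a b := by
          rw [dist_comm]; linarith
        have haa : dist a a' < dist a b := by linarith
        calc dist a b ≤ max (dist a a') (dist a' b) := h1
          _ ≤ max (dist a a') (max (dist a' b') (dist b' b)) := max_le_max le_rfl h2
          _ < dist a b := by
              apply max_lt haa (max_lt hlt hbb)
      exact absurd this (lt_irrefl _)
    have : dist a b = dist a' b' := le_antisymm hge hle
    rw [this]
    exact hK a' ha' b' hb'
  refine ⟨part1, ?_⟩
  intro X _ _ _ _ Y m hY hK htend p q
  rcases eq_or_ne p q with rfl | hne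
  · simpa using h0
  · have hdpos : 0 < dist p q := dist_pos.mpr hne
    -- find n with GHuDist X (Y n) < dist p q / 2
    have := (Metric.tendsto_atTop.mp htend) (dist p q / 2) (by linarith)
    obtain ⟨N, hN⟩ := this
    have hlt : (letI := m N; GHuDist X (Y N)) < dist p q / 2 := by
      have := hN N le_rfl
      rw [Real.dist_eq, sub_zero] at this
      exact lt_of_le_of_lt (le_abs_self _) this
    letI := m N
    obtain ⟨hu, hc, hne'⟩ := hY N
    haveI := hu; haveI := hc; haveI := hne'
    have hSne := GHu_set_nonempty X (Y N)
    rw [GHuDist] at hlt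
    obtain ⟨r, hr, hrlt⟩ := exists_lt_of_csInf_lt hSne hlt
    obtain ⟨Z, mZ, hUZ, i, j, hi, hj, hdist⟩ := hr
    subst hdist
    have key := part1 Z (Set.range i) (Set.range j)
      (Set.range_nonempty i)
      (by rw [← Set.image_univ]; exact isCompact_univ.image hi.continuous)
      (Set.range_nonempty j)
      (by rw [← Set.image_univ]; exact isCompact_univ.image hj.continuous)
      (by rintro _ ⟨u, rfl⟩ _ ⟨v, rfl⟩; rw [hj.dist_eq]; exact hK N u v)
      (i p) ⟨p, rfl⟩ (i q) ⟨q, rfl⟩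
      (by rw [hi.dist_eq]; exact hrlt)
    rwa [hi.dist_eq] at key
end

section
/- Let (Z,d) be an ultrametric space and X, X' ⊆ Z nonempty compact subsets with d_H(X, X') < ε. Then for every pair a, b ∈ X with d(a,b) ≥ 2ε, there exist a', b' ∈ X' with d(a',b') = d(a,b). -/
lemma ultra_isosceles {Z : Type*} [MetricSpace Z] [IsUltrametricDist Z]
    {x y z : Z} (h : dist x z < dist x y) : dist z y = dist x y := by
  apply le_antisymm
  · calc dist z y ≤ max (dist z x) (dist x y) := IsUltrametricDist.dist_triangle_max z x y
      _ = dist x y := max_eq_right (by rw [dist_comm]; exact h.le)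
  · rcases le_or_gt (dist x z) (dist z y) with hc | hc
    · calc dist x y ≤ max (dist x z) (dist z y) := IsUltrametricDist.dist_triangle_max x z y
        _ = dist z y := max_eq_right hc
    · exfalso
      have := IsUltrametricDist.dist_triangle_max x z y
      rw [max_eq_left hc.le] at this
      exact absurd h (not_lt.mpr this)

/-- In an ultrametric space, if two nonempty compact sets are at Hausdorff distance
less than ε, then every distance ≥ 2ε realized in one set is realized in the other. -/
theorem ultrametric_hausdorff_dist_realized {Z : Type*} [MetricSpace Z]
    [IsUltrametricDist Z] (X X' : Set Z) (hX : X.Nonempty) (hXc : IsCompact X)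
    (hX' : X'.Nonempty) (hX'c : IsCompact X') (ε : ℝ)
    (h : Metric.hausdorffDist X X' < ε) :
    ∀ a ∈ X, ∀ b ∈ X, 2 * ε ≤ dist a b →
      ∃ a' ∈ X', ∃ b' ∈ X', dist a' b' = dist a b := by
  intro a ha b hb hab
  have hεpos : 0 < ε := lt_of_le_of_lt (Metric.hausdorffDist_nonneg) h
  have hfin : EMetric.hausdorffEdist X X' ≠ ⊤ :=
    Metric.hausdorffEdist_ne_top_of_nonempty_of_bounded hX hX' hXc.isBounded hX'c.isBounded
  obtain ⟨a', ha', haa'⟩ := Metric.exists_dist_lt_of_hausdorffDist_lt ha h hfin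
  obtain ⟨b', hb', hbb'⟩ := Metric.exists_dist_lt_of_hausdorffDist_lt hb h hfin
  have h1 : dist a a' < dist a b := haa'.trans_le (by linarith)
  have h2 : dist a' b = dist a b := ultra_isosceles h1
  have h3 : dist b b' < dist b a' := by
    rw [dist_comm b a', h2]; exact hbb'.trans_le (by linarith)
  have h4 : dist b' a' = dist b a' := ultra_isosceles h3
  exact ⟨a', ha', b', hb', by rw [dist_comm a' b', h4, dist_comm b a', h2]⟩
end

section
/- Let Y be a finite ultrametric space, c > 0 strictly less than every positive distance in Y, and for each n let Y_n be Y with n extra points attached at mutual distance c and at distance c from a fixed base point x₁ ∈ Y (and at distance d(y,x₁) from other y ∈ Y). Then for all m ≠ n, ρ_GHu(Y_m, Y_n) ≥ c/2. -/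
open Classical

section Aux

variable {Y : Type} [MetricSpace Y]

/-- The candidate distance on `Y ⊕ (Fin m ⊕ Fin n)`. -/
noncomputable def auxDist (x₁ : Y) (c : ℝ) {m n : ℕ} :
    Y ⊕ (Fin m ⊕ Fin n) → Y ⊕ (Fin m ⊕ Fin n) → ℝ
  | Sum.inl y, Sum.inl y' => dist y y'
  | Sum.inl y, Sum.inr _ => max c (dist y x₁)
  | Sum.inr _, Sum.inl y => max c (dist y x₁)
  | Sum.inr a, Sum.inr b => if a = b then 0 else c

lemma auxDist_ultra [IsUltrametricDist Y] (x₁ : Y) {c : ℝ} (hc : 0 < c) {m n : ℕ}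
    (x y z : Y ⊕ (Fin m ⊕ Fin n)) :
    auxDist x₁ c x z ≤ max (auxDist x₁ c x y) (auxDist x₁ c y z) := by
  have key : ∀ y1 y2 : Y, max c (dist y1 x₁) ≤ max (dist y1 y2) (max c (dist y2 x₁)) := by
    intro y1 y2
    have h1 : dist y1 x₁ ≤ max (dist y1 y2) (dist y2 x₁) :=
      IsUltrametricDist.dist_triangle_max y1 y2 x₁
    apply max_le
    · exact le_max_of_le_right (le_max_left _ _)
    · exact le_trans h1 (max_le_max le_rfl (le_max_right _ _))
  rcases x with y1 | a <;> rcases y with y2 | b <;> rcases z with y3 | e <;>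
      simp only [auxDist]
  · exact IsUltrametricDist.dist_triangle_max y1 y2 y3
  · exact key y1 y2
  · calc dist y1 y3 ≤ max (dist y1 x₁) (dist x₁ y3) :=
          IsUltrametricDist.dist_triangle_max y1 x₁ y3
      _ ≤ max (max c (dist y1 x₁)) (max c (dist y3 x₁)) := by
          apply max_le_max (le_max_right _ _)
          rw [dist_comm]; exact le_max_right _ _
  · exact le_max_of_le_left (le_refl _)
  · have h := key y3 y2
    calc max c (dist y3 x₁) ≤ max (dist y3 y2) (max c (dist y2 x₁)) := h
      _ = max (max c (dist y2 x₁)) (dist y2 y3) := by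
          rw [max_comm (dist y3 y2), dist_comm y3 y2]
  · have : (if a = e then (0:ℝ) else c) ≤ c := by split <;> [exact le_of_lt hc; rfl]
    exact le_trans this (le_max_of_le_left (le_max_left _ _))
  · exact le_max_of_le_right (le_refl _)
  · by_cases hae : a = e
    · simp only [if_pos hae]
      have : (0:ℝ) ≤ max (if a = b then (0:ℝ) else c) (if b = e then (0:ℝ) else c) := by
        apply le_max_of_le_left; split <;> [rfl; exact le_of_lt hc]
      exact this
    · simp only [if_neg hae]
      by_cases hab : a = b
      · subst hab
        simp only [if_neg hae, le_max_iff]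
        right; rfl
      · simp only [if_neg hab, le_max_iff]; left; rfl

lemma auxDist_self (x₁ : Y) (c : ℝ) {m n : ℕ} (x : Y ⊕ (Fin m ⊕ Fin n)) :
    auxDist x₁ c x x = 0 := by
  rcases x with y | a <;> simp [auxDist]

lemma auxDist_comm (x₁ : Y) (c : ℝ) {m n : ℕ} (x y : Y ⊕ (Fin m ⊕ Fin n)) :
    auxDist x₁ c x y = auxDist x₁ c y x := by
  rcases x with y1 | a <;> rcases y with y2 | b
  · simp [auxDist, dist_comm]
  · rfl
  · rfl
  · by_cases h : a = b
    · simp [auxDist, h]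
    · simp only [auxDist]
      rw [if_neg h, if_neg (fun hba => h hba.symm)]

lemma auxDist_eq_zero [IsUltrametricDist Y] (x₁ : Y) {c : ℝ} (hc : 0 < c) {m n : ℕ}
    (x y : Y ⊕ (Fin m ⊕ Fin n)) (h : auxDist x₁ c x y = 0) : x = y := by
  rcases x with y1 | a <;> rcases y with y2 | b
  · simp only [auxDist] at h; exact congrArg Sum.inl (dist_eq_zero.mp h)
  · exfalso; simp only [auxDist] at h
    have : c ≤ (0:ℝ) := h ▸ le_max_left _ _
    linarith
  · exfalso; simp only [auxDist] at h
    have : c ≤ (0:ℝ) := h ▸ le_max_left _ _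
    linarith
  · simp only [auxDist] at h
    by_cases hab : a = b
    · exact congrArg Sum.inr hab
    · rw [if_neg hab] at h; exact absurd h (ne_of_gt hc)

/-- The metric space structure on `Y ⊕ (Fin m ⊕ Fin n)`. -/
noncomputable def auxSpace [IsUltrametricDist Y] (x₁ : Y) {c : ℝ} (hc : 0 < c) (m n : ℕ) :
    MetricSpace (Y ⊕ (Fin m ⊕ Fin n)) :=
  { dist := auxDist x₁ c
    dist_self := auxDist_self x₁ c
    dist_comm := auxDist_comm x₁ c
    dist_triangle := by
      intro x y z
      have h := auxDist_ultra x₁ hc x y z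
      have h0y : 0 ≤ auxDist x₁ c x y := by
        by_contra hlt
        push_neg at hlt
        have h1 := auxDist_ultra x₁ hc x y x
        rw [auxDist_self, auxDist_comm x₁ c y x] at h1
        have := le_max_iff.mp h1
        rcases this with h' | h' <;> linarith
      have h0z : 0 ≤ auxDist x₁ c y z := by
        by_contra hlt
        push_neg at hlt
        have h1 := auxDist_ultra x₁ hc y z y
        rw [auxDist_self, auxDist_comm x₁ c z y] at h1
        have := le_max_iff.mp h1
        rcases this with h' | h' <;> linarith
      calc auxDist x₁ c x z ≤ max (auxDist x₁ c x y) (auxDist x₁ c y z) := h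
        _ ≤ auxDist x₁ c x y + auxDist x₁ c y z := max_le_add_of_nonneg h0y h0z
    eq_of_dist_eq_zero := auxDist_eq_zero x₁ hc _ _ }

end Aux

/-- Key pigeonhole lemma: no common ultrametric embedding of `Y_m` and `Y_n` with
`n < m` can have Hausdorff distance less than `c/2`. -/
lemma aux_pigeonhole (Y : Type) [MetricSpace Y] [Fintype Y]
    (x₁ : Y) (c : ℝ) (hc : 0 < c) (hcs : ∀ y y' : Y, y ≠ y' → c < dist y y')
    (m n : ℕ) (hnm : n < m)
    (ρm : MetricSpace (Y ⊕ Fin m)) (ρn : MetricSpace (Y ⊕ Fin n))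
    (hmMix : ∀ (y : Y) (i : Fin m),
      dist (Sum.inl y : Y ⊕ Fin m) (Sum.inr i) = if y = x₁ then c else dist y x₁)
    (hmNew : ∀ i j : Fin m, i ≠ j → dist (Sum.inr i : Y ⊕ Fin m) (Sum.inr j) = c)
    (hnY : ∀ y y' : Y, dist (Sum.inl y : Y ⊕ Fin n) (Sum.inl y') = dist y y')
    (hnMix : ∀ (y : Y) (i : Fin n),
      dist (Sum.inl y : Y ⊕ Fin n) (Sum.inr i) = if y = x₁ then c else dist y x₁)
    (Z : Type) (ρZ : MetricSpace Z) (hZ : IsUltrametricDist Z)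
    (i : Y ⊕ Fin m → Z) (j : Y ⊕ Fin n → Z) (hi : Isometry i) (hj : Isometry j)
    (hd : Metric.hausdorffDist (Set.range i) (Set.range j) < c / 2) : False := by
  -- the m+1 cluster points of Y_m
  set P : Fin (m + 1) → Y ⊕ Fin m := fun k =>
    if h : (k : ℕ) < m then Sum.inr ⟨k, h⟩ else Sum.inl x₁ with hP_def
  have hP : ∀ k l : Fin (m + 1), k ≠ l → dist (P k) (P l) = c := by
    intro k l hkl
    have hval : (k : ℕ) ≠ (l : ℕ) := fun h => hkl (Fin.ext h)
    simp only [hP_def]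
    by_cases hk : (k : ℕ) < m <;> by_cases hl : (l : ℕ) < m
    · rw [dif_pos hk, dif_pos hl]
      refine hmNew _ _ ?_
      intro h
      apply hval
      injection h
    · rw [dif_pos hk, dif_neg hl, dist_comm, hmMix, if_pos rfl]
    · rw [dif_neg hk, dif_pos hl, hmMix, if_pos rfl]
    · exfalso
      have hk' : (k : ℕ) = m := le_antisymm (Nat.lt_succ_iff.mp k.isLt) (le_of_not_gt hk)
      have hl' : (l : ℕ) = m := le_antisymm (Nat.lt_succ_iff.mp l.isLt) (le_of_not_gt hl)
      exact hval (hk'.trans hl'.symm)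
  -- choose nearby points in range j
  haveI : Nonempty (Y ⊕ Fin m) := ⟨Sum.inl x₁⟩
  haveI : Nonempty (Y ⊕ Fin n) := ⟨Sum.inl x₁⟩
  have hfin := Metric.hausdorffEdist_ne_top_of_nonempty_of_bounded
      (Set.range_nonempty i) (Set.range_nonempty j)
      (Set.finite_range i).isBounded (Set.finite_range j).isBounded
  have hchoose : ∀ k : Fin (m + 1), ∃ w : Y ⊕ Fin n, dist (i (P k)) (j w) < c / 2 := by
    intro k
    obtain ⟨q, hq, hq2⟩ := Metric.exists_dist_lt_of_hausdorffDist_lt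
      (Set.mem_range_self (P k)) hd hfin
    obtain ⟨w, rfl⟩ := hq
    exact ⟨w, hq2⟩
  choose z hz using hchoose
  -- the chosen points are pairwise at distance exactly c
  have hzz : ∀ k l : Fin (m + 1), k ≠ l → dist (z k) (z l) = c := by
    intro k l hkl
    have hab : dist (i (P k)) (i (P l)) = c := by rw [hi.dist_eq]; exact hP k l hkl
    set a := i (P k); set b := i (P l); set u := j (z k); set v := j (z l)
    have hau : dist a u < c / 2 := hz k
    have hbv : dist b v < c / 2 := hz l
    have upper : dist u v ≤ c := by
      have h1 : dist u v ≤ max (dist u a) (dist a v) :=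
        IsUltrametricDist.dist_triangle_max u a v
      have h2 : dist a v ≤ max (dist a b) (dist b v) :=
        IsUltrametricDist.dist_triangle_max a b v
      have hua : dist u a ≤ c := by rw [dist_comm]; linarith
      have hav : dist a v ≤ c := le_trans h2 (max_le (le_of_eq hab) (by linarith))
      exact le_trans h1 (max_le hua hav)
    have lower : c ≤ dist u v := by
      by_contra hlt
      push_neg at hlt
      have h1 : dist a b ≤ max (dist a u) (dist u b) :=
        IsUltrametricDist.dist_triangle_max a u b
      have h2 : dist u b ≤ max (dist u v) (dist v b) :=
        IsUltrametricDist.dist_triangle_max u v b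
      have hvb : dist v b < c := by rw [dist_comm]; linarith
      have hub : dist u b < c := lt_of_le_of_lt h2 (max_lt hlt hvb)
      have : dist a b < c := lt_of_le_of_lt h1 (max_lt (by linarith) hub)
      linarith [hab]
    have huv : dist u v = c := le_antisymm upper lower
    rw [← hj.dist_eq]; exact huv
  -- every z k is a cluster point of Y_n
  have hmem : ∀ (k : Fin (m + 1)) (y : Y), z k = Sum.inl y → y = x₁ := by
    intro k y hk
    have hm1 : 1 ≤ m := Nat.one_le_iff_ne_zero.mpr (fun h => Nat.not_lt_zero n (h ▸ hnm))
    have h01 : (0 : Fin (m + 1)) ≠ (1 : Fin (m + 1)) := by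
      intro h
      have := congrArg Fin.val h
      simp [Fin.val_one', Nat.mod_eq_of_lt (Nat.succ_lt_succ hm1)] at this
    obtain ⟨l, hl⟩ : ∃ l : Fin (m + 1), l ≠ k := by
      by_cases h : k = 0
      · exact ⟨1, fun h1 => h01 (h ▸ h1.symm)⟩
      · exact ⟨0, fun h0 => h h0.symm⟩
    have hdl : dist (z k) (z l) = c := hzz k l (Ne.symm hl)
    by_contra hy
    rcases hzl : z l with y' | a
    · rw [hk, hzl, hnY] at hdl
      by_cases hyy : y = y'
      · subst hyy; rw [dist_self] at hdl; linarith
      · have := hcs y y' hyy; linarith [hdl]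
    · rw [hk, hzl, hnMix, if_neg hy] at hdl
      have := hcs y x₁ hy; linarith [hdl]
  -- build an injection Fin (m+1) → Fin (n+1)
  have hzinj : Function.Injective z := by
    intro k l h
    by_contra hkl
    have := hzz k l hkl
    rw [h, dist_self] at this
    linarith
  set g : Fin (m + 1) → Fin (n + 1) := fun k =>
    match z k with
    | Sum.inl _ => 0
    | Sum.inr a => a.succ with hg_def
  have hginj : Function.Injective g := by
    intro k l h
    rcases hk : z k with y | a <;> rcases hl : z l with y' | b
    · have h1 : y = x₁ := hmem k y hk
      have h2 : y' = x₁ := hmem l y' hl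
      exact hzinj (by rw [hk, hl, h1, h2])
    · exfalso
      simp only [hg_def, hk, hl] at h
      exact (Fin.succ_ne_zero b) h.symm
    · exfalso
      simp only [hg_def, hk, hl] at h
      exact (Fin.succ_ne_zero a) h
    · have : a = b := Fin.succ_injective n (by simpa only [hg_def, hk, hl] using h)
      exact hzinj (by rw [hk, hl, this])
  have hcard : m + 1 ≤ n + 1 := by
    have := Fintype.card_le_of_injective g hginj
    simpa using this
  omega

/-- The spaces `Y_m` obtained from a finite ultrametric space `Y` by attaching `m`
extra points at mutual distance `c` (with `c` smaller than every positive distance of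
`Y`) are pairwise at ultrametric Gromov–Hausdorff distance at least `c/2`. -/
theorem GHuDist_attached_ge (Y : Type) [MetricSpace Y] [Fintype Y] [IsUltrametricDist Y]
    (x₁ : Y) (c : ℝ) (hc : 0 < c) (hcs : ∀ y y' : Y, y ≠ y' → c < dist y y')
    (m n : ℕ) (hmn : m ≠ n)
    (ρm : MetricSpace (Y ⊕ Fin m)) (ρn : MetricSpace (Y ⊕ Fin n))
    (hmY : ∀ y y' : Y, dist (Sum.inl y : Y ⊕ Fin m) (Sum.inl y') = dist y y')
    (hmMix : ∀ (y : Y) (i : Fin m),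
      dist (Sum.inl y : Y ⊕ Fin m) (Sum.inr i) = if y = x₁ then c else dist y x₁)
    (hmNew : ∀ i j : Fin m, i ≠ j → dist (Sum.inr i : Y ⊕ Fin m) (Sum.inr j) = c)
    (hnY : ∀ y y' : Y, dist (Sum.inl y : Y ⊕ Fin n) (Sum.inl y') = dist y y')
    (hnMix : ∀ (y : Y) (i : Fin n),
      dist (Sum.inl y : Y ⊕ Fin n) (Sum.inr i) = if y = x₁ then c else dist y x₁)
    (hnNew : ∀ i j : Fin n, i ≠ j → dist (Sum.inr i : Y ⊕ Fin n) (Sum.inr j) = c) :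
    c / 2 ≤ GHuDist (Y ⊕ Fin m) (Y ⊕ Fin n) := by
  -- the set is nonempty: build a common ultrametric space
  have hne : { r : ℝ | ∃ (Z : Type) (_ : MetricSpace Z), IsUltrametricDist Z ∧
      ∃ (i : Y ⊕ Fin m → Z) (j : Y ⊕ Fin n → Z), Isometry i ∧ Isometry j ∧
        Metric.hausdorffDist (Set.range i) (Set.range j) = r }.Nonempty := by
    letI Zs : MetricSpace (Y ⊕ (Fin m ⊕ Fin n)) := auxSpace x₁ hc m n
    have hZdist : ∀ x y : Y ⊕ (Fin m ⊕ Fin n), dist x y = auxDist x₁ c x y := fun _ _ => rfl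
    have hUltra : IsUltrametricDist (Y ⊕ (Fin m ⊕ Fin n)) := by
      constructor
      intro x y z
      rw [hZdist, hZdist, hZdist]
      exact auxDist_ultra x₁ hc x y z
    set i : Y ⊕ Fin m → Y ⊕ (Fin m ⊕ Fin n) := fun s =>
      match s with
      | Sum.inl y => Sum.inl y
      | Sum.inr a => Sum.inr (Sum.inl a) with hi_def
    set j : Y ⊕ Fin n → Y ⊕ (Fin m ⊕ Fin n) := fun s =>
      match s with
      | Sum.inl y => Sum.inl y
      | Sum.inr a => Sum.inr (Sum.inr a) with hj_def
    have hmaxc : ∀ y : Y, max c (dist y x₁) = if y = x₁ then c else dist y x₁ := by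
      intro y
      by_cases hy : y = x₁
      · subst hy; simp [le_of_lt hc]
      · rw [if_neg hy]; exact max_eq_right (le_of_lt (hcs y x₁ hy))
    have hii : Isometry i := by
      apply Isometry.of_dist_eq
      intro a b
      rcases a with y | a <;> rcases b with y' | b <;>
        simp only [hi_def, hZdist, auxDist]
      · exact (hmY y y').symm
      · rw [hmaxc]; exact (hmMix y b).symm
      · rw [hmaxc, dist_comm (α := Y ⊕ Fin m), hmMix y' a]
      · by_cases hab : a = b
        · subst hab; simp
        · rw [if_neg (show ¬(Sum.inl a : Fin m ⊕ Fin n) = Sum.inl b from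
            fun h => hab (Sum.inl_injective h)), hmNew a b hab]
    have hjj : Isometry j := by
      apply Isometry.of_dist_eq
      intro a b
      rcases a with y | a <;> rcases b with y' | b <;>
        simp only [hj_def, hZdist, auxDist]
      · exact (hnY y y').symm
      · rw [hmaxc]; exact (hnMix y b).symm
      · rw [hmaxc, dist_comm (α := Y ⊕ Fin n), hnMix y' a]
      · by_cases hab : a = b
        · subst hab; simp
        · rw [if_neg (show ¬(Sum.inr a : Fin m ⊕ Fin n) = Sum.inr b from
            fun h => hab (Sum.inr_injective h)), hnNew a b hab]
    exact ⟨_, Y ⊕ (Fin m ⊕ Fin n), Zs, hUltra, i, j, hii, hjj, rfl⟩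
  -- lower bound
  apply le_csInf hne
  rintro r ⟨Z, ρZ, hZ, i, j, hi, hj, hr⟩
  by_contra hlt
  push_neg at hlt
  rcases lt_or_gt_of_ne hmn with hmn' | hmn'
  · -- m < n : swap roles
    exact aux_pigeonhole Y x₁ c hc hcs n m hmn' ρn ρm hnMix hnNew hmY hmMix Z ρZ hZ j i hj hi
      (by rw [Metric.hausdorffDist_comm, hr]; exact hlt)
  · exact aux_pigeonhole Y x₁ c hc hcs m n hmn' ρm ρn hmMix hmNew hnY hnMix Z ρZ hZ i j hi hj
      (hr ▸ hlt)
end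

section
/- Let K ⊆ ℝ≥0 be countable with 0 ∈ K a non-isolated point of K. Then the finite ultrametric spaces with distances in K form a dense subset of U(K), the space of compact ultrametric spaces with distances in K, with respect to ρ_GHu; hence U(K) is separable. -/
/-- A "code" for a finite metric space: a size together with a distance matrix. -/
abbrev UKCode : Type := Σ m : ℕ, Fin m → Fin m → ℝ

/-- Validity of a code with distances in `K`: a nonempty finite ultrametric space. -/
def UKValid (K : Set ℝ) (p : UKCode) : Prop :=
  0 < p.1 ∧ (∀ i j, p.2 i j ∈ K) ∧ (∀ i j, 0 ≤ p.2 i j) ∧ (∀ i, p.2 i i = 0) ∧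
  (∀ i j, p.2 i j = p.2 j i) ∧ (∀ i j, p.2 i j = 0 → i = j) ∧
  (∀ i j k, p.2 i k ≤ max (p.2 i j) (p.2 j k))

/-- The metric space structure on `Fin p.1` given by a valid code. -/
noncomputable def codeMetric {K : Set ℝ} (p : UKCode) (hp : UKValid K p) :
    MetricSpace (Fin p.1) where
  dist := p.2
  dist_self := hp.2.2.2.1
  dist_comm := hp.2.2.2.2.1
  dist_triangle x y z :=
    le_trans (hp.2.2.2.2.2.2 x y z) (max_le_add_of_nonneg (hp.2.2.1 x y) (hp.2.2.1 y z))
  eq_of_dist_eq_zero := hp.2.2.2.2.2.1 _ _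
  edist_dist x y := rfl

lemma GHuDist_le_of_into {X : Type} [MetricSpace X] [IsUltrametricDist X] {F : Type}
    [MetricSpace F] (j : F → X) (hj : Isometry j) {r : ℝ}
    (h : Metric.hausdorffDist Set.univ (Set.range j) ≤ r) : GHuDist X F ≤ r := by
  have hbdd : BddBelow { r : ℝ | ∃ (Z : Type) (_ : MetricSpace Z), IsUltrametricDist Z ∧
      ∃ (i : X → Z) (jj : F → Z), Isometry i ∧ Isometry jj ∧
        Metric.hausdorffDist (Set.range i) (Set.range jj) = r } := by
    refine ⟨0, fun r hr => ?_⟩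
    obtain ⟨Z, mZ, hZ, i, jj, hi, hjj, hd⟩ := hr
    exact hd ▸ Metric.hausdorffDist_nonneg
  have hmem : Metric.hausdorffDist Set.univ (Set.range j) ∈
      { r : ℝ | ∃ (Z : Type) (_ : MetricSpace Z), IsUltrametricDist Z ∧
        ∃ (i : X → Z) (jj : F → Z), Isometry i ∧ Isometry jj ∧
          Metric.hausdorffDist (Set.range i) (Set.range jj) = r } :=
    ⟨X, ‹_›, ‹_›, id, j, isometry_id, hj, by rw [Set.range_id]⟩
  exact le_trans (csInf_le hbdd hmem) h

/-- A finite net with controlled Hausdorff distance. -/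
lemma exists_net (X : Type) [MetricSpace X] [CompactSpace X] [Nonempty X] {ε : ℝ}
    (hε : 0 < ε) : ∃ s : Set X, s.Finite ∧ s.Nonempty ∧
      Metric.hausdorffDist Set.univ s ≤ ε := by
  obtain ⟨t, -, htf, htc⟩ := isCompact_univ.finite_cover_balls (s := (Set.univ : Set X)) hε
  have hcov : ∀ x : X, ∃ y ∈ t, dist x y ≤ ε := by
    intro x
    have := htc (Set.mem_univ x)
    simp only [Set.mem_iUnion, Metric.mem_ball] at this
    obtain ⟨y, hy, hxy⟩ := this
    exact ⟨y, hy, hxy.le⟩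
  obtain ⟨y0, hy0, -⟩ := hcov (Classical.arbitrary X)
  refine ⟨t, htf, ⟨y0, hy0⟩, ?_⟩
  refine Metric.hausdorffDist_le_of_mem_dist hε.le (fun x _ => hcov x) fun y hy =>
    ⟨y, Set.mem_univ y, by simp [hε.le]⟩

/-- For countable `K ⊆ ℝ≥0` with `0 ∈ K` non-isolated, the finite ultrametric spaces
with distances in `K` are dense in `U(K)`, and `U(K)` is separable: it has a
countable dense family. -/
theorem UK_separable (K : Set ℝ) (hKc : K.Countable) (hK0 : (0:ℝ) ∈ K)
    (hKnn : ∀ x ∈ K, 0 ≤ x) (hKacc : ∀ δ : ℝ, 0 < δ → ∃ x ∈ K, 0 < x ∧ x < δ) :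
    (∀ (X : Type) [MetricSpace X] [CompactSpace X] [Nonempty X] [IsUltrametricDist X],
      (∀ p q : X, dist p q ∈ K) → ∀ ε : ℝ, 0 < ε →
      ∃ (F : Type) (_ : MetricSpace F), Finite F ∧ Nonempty F ∧ IsUltrametricDist F ∧
        (∀ p q : F, dist p q ∈ K) ∧ GHuDist X F ≤ ε)
    ∧
    (∃ (D : ℕ → Type) (mD : ∀ n, MetricSpace (D n)),
      (∀ n, letI := mD n; CompactSpace (D n) ∧ Nonempty (D n) ∧ IsUltrametricDist (D n) ∧
        ∀ p q : D n, dist p q ∈ K) ∧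
      ∀ (X : Type) [MetricSpace X] [CompactSpace X] [Nonempty X] [IsUltrametricDist X],
        (∀ p q : X, dist p q ∈ K) → ∀ ε : ℝ, 0 < ε →
        ∃ n, (letI := mD n; GHuDist X (D n)) < ε) := by
  have hvalK : ∀ (X : Type) [MetricSpace X] [Nonempty X] [IsUltrametricDist X]
      [Fintype X] (hdK : ∀ p q : X, dist p q ∈ K),
      UKValid K ⟨Fintype.card X, fun i j =>
        dist ((Fintype.equivFin X).symm i) ((Fintype.equivFin X).symm j)⟩ := by
    intro X _ _ _ _ hdK
    refine ⟨Fintype.card_pos_iff.mpr ‹_›, fun i j => hdK _ _, fun i j => dist_nonneg,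
      fun i => dist_self _, fun i j => dist_comm _ _, fun i j h => ?_,
      fun i j k => IsUltrametricDist.dist_triangle_max _ _ _⟩
    exact (Fintype.equivFin X).symm.injective (by exact_mod_cast eq_of_dist_eq_zero h)
  constructor
  · intro X _ _ _ _ hdK ε hε
    obtain ⟨s, hsf, hsn, hsd⟩ := exists_net X hε
    haveI := hsf.to_subtype
    haveI := hsn.to_subtype
    refine ⟨s, inferInstance, inferInstance, inferInstance, inferInstance,
      fun p q => by rw [Subtype.dist_eq]; exact hdK _ _, ?_⟩
    refine GHuDist_le_of_into Subtype.val isometry_subtype_coe ?_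
    rwa [Subtype.range_val]
  · have hSc : {p : UKCode | UKValid K p}.Countable := by
      haveI := hKc.to_subtype
      have hsub : {p : UKCode | UKValid K p} ⊆ Set.range
          (fun q : Σ m : ℕ, Fin m → Fin m → K =>
            (⟨q.1, fun i j => ((q.2 i j : K) : ℝ)⟩ : UKCode)) := by
        rintro ⟨m, f⟩ hp
        exact ⟨⟨m, fun i j => ⟨f i j, hp.2.1 i j⟩⟩, rfl⟩
      exact Set.Countable.mono hsub (Set.countable_range _)
    have hSne : {p : UKCode | UKValid K p}.Nonempty := by
      refine ⟨⟨1, fun _ _ => 0⟩, one_pos, fun i j => hK0, fun i j => le_refl 0,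
        fun i => rfl, fun i j => rfl, fun i j _ => Subsingleton.elim i j,
        fun i j k => by simp⟩
    obtain ⟨e, he⟩ := hSc.exists_eq_range hSne
    have hv : ∀ n, UKValid K (e n) := by
      intro n
      have : e n ∈ {p : UKCode | UKValid K p} := by rw [he]; exact ⟨n, rfl⟩
      exact this
    refine ⟨fun n => Fin (e n).1, fun n => codeMetric (e n) (hv n), fun n => ?_, ?_⟩
    · letI := codeMetric (e n) (hv n)
      haveI : Nonempty (Fin (e n).1) := ⟨⟨0, (hv n).1⟩⟩
      exact ⟨inferInstance, ‹_›, ⟨fun x y z => (hv n).2.2.2.2.2.2 x y z⟩,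
        fun p q => (hv n).2.1 p q⟩
    · intro X _ _ _ _ hdK ε hε
      obtain ⟨s, hsf, hsn, hsd⟩ := exists_net X (half_pos hε)
      haveI := hsf.fintype
      haveI := hsn.to_subtype
      have hc : (⟨Fintype.card s, fun i j =>
          dist ((Fintype.equivFin s).symm i) ((Fintype.equivFin s).symm j)⟩ : UKCode) ∈
            {p : UKCode | UKValid K p} :=
        hvalK s fun p q => by rw [Subtype.dist_eq]; exact hdK _ _
      rw [he] at hc
      obtain ⟨n, hn⟩ := hc
      refine ⟨n, ?_⟩
      have h2 : ∃ j : Fin (e n).1 → X, (∀ k k', dist (j k) (j k') = (e n).2 k k') ∧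
          Metric.hausdorffDist Set.univ (Set.range j) ≤ ε / 2 := by
        rw [hn]
        refine ⟨fun k => (((Fintype.equivFin s).symm k : s) : X),
          fun k k' => by exact rfl, ?_⟩
        have hr : Set.range (fun k => (((Fintype.equivFin s).symm k : s) : X)) = s := by
          show Set.range (Subtype.val ∘ (Fintype.equivFin s).symm) = s
          rw [Set.range_comp, (Fintype.equivFin s).symm.surjective.range_eq,
            Set.image_univ, Subtype.range_val]
        rwa [hr]
      obtain ⟨j, hjd, hjh⟩ := h2
      letI := codeMetric (e n) (hv n)
      have hj : Isometry j := Isometry.of_dist_eq fun k k' => hjd k k'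
      calc GHuDist X (Fin (e n).1) ≤ ε / 2 := GHuDist_le_of_into j hj hjh
        _ < ε := by linarith
end
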